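/- In the IRL1 setting with level-set boundedness, the set Ω of cluster points of {x^k} is nonempty, and every x* ∈ Ω is a first-order stationary point of the ℓp-regularized problem min F(x) = f(x) + λ Σ_{i=1}^n |x_i|^p; that is, ∇_i f(x*) + λ p |x_i*|^{p−1} sign(x_i*) = 0 for every i with x_i* ≠ 0. -/

import Mathlib

/-!
Sufficient decrease: the descent lemma for `f`, the strong convexity of `Q_k` (whose gradient
agrees with `∇f` at `x^k`), the quadratic growth of the strongly convex subproblem objective
`G(·; x^k, ε^k)` around its minimizer `x^{k+1}`, and the tangent-line bound for the concave
`t ↦ t^p` with `ε^{k+1} ≤ ε^k` combine to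
`F(x^{k+1}, ε^{k+1}) + (M - L_f/2) ‖x^{k+1} - x^k‖² ≤ F(x^k, ε^k)`.
So the iterates stay in the bounded level set, which yields cluster points, and since
`F(x^k, ε^k) ≥ f(x^k)` is bounded below there, `x^{k+1} - x^k → 0`.
If `x^{φ k} → x*` with `x*_i ≠ 0`, then `x^{φ k + 1}_i ≠ 0` eventually, where the subproblem is
smooth in the `i`-th coordinate and its optimality condition reads
`∂_i Q_k(x^{k+1}) + λ w(x^k_i, ε^k_i) sign(x^{k+1}_i) = 0`. The Lipschitz bounds give
`∇Q_{φ k}(x^{φ k + 1}) → ∇f(x*)`, and `ε^k → 0` gives `w(x^{φ k}_i, ε^{φ k}_i) → p |x*_i|^{p-1}`.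
-/

open Filter Topology

/-- The weight function `w(t, s) = p(|t| + s)^(p-1)`. -/
noncomputable def wfun (p t s : ℝ) : ℝ := p * (|t| + s) ^ (p - 1)

/-- The IRL1 setting (Algorithm 2.1 of the paper): fixed data `p ∈ (0,1)`, `λ > 0`,
`μ ∈ (0,1)`, a differentiable `f` with `Lf`-Lipschitz gradient (`Lf ≥ 0`), iterates
`x^k`, positive parameters `ε^k` with `ε^{k+1} ≤ μ ε^k` componentwise, and for each `k`
a differentiable model `Q_k` with `∇Q_k(x^k) = ∇f(x^k)`, `M`-strongly convex with
`M > Lf/2` (strong convexity meaning `z ↦ Q_k z - (M/2)‖z‖²` is convex), `∇Q_k`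
`L`-Lipschitz, such that `x^{k+1}` is a global minimizer of
`G(·; x^k, ε^k) = Q_k(·) + λ Σᵢ w(xᵢ^k, εᵢ^k)|·ᵢ|`. -/
structure IRL1 (n : ℕ) where
  p : ℝ
  lam : ℝ
  mu : ℝ
  Lf : ℝ
  M : ℝ
  L : ℝ
  f : EuclideanSpace ℝ (Fin n) → ℝ
  x : ℕ → EuclideanSpace ℝ (Fin n)
  eps : ℕ → Fin n → ℝ
  Q : ℕ → EuclideanSpace ℝ (Fin n) → ℝ
  hp0 : 0 < p
  hp1 : p < 1
  hlam : 0 < lam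
  hmu0 : 0 < mu
  hmu1 : mu < 1
  hLf : 0 ≤ Lf
  hM : Lf / 2 < M
  hf_diff : Differentiable ℝ f
  hf_lip : ∀ a b, ‖gradient f a - gradient f b‖ ≤ Lf * ‖a - b‖
  heps_pos : ∀ k i, 0 < eps k i
  heps_dec : ∀ k i, eps (k + 1) i ≤ mu * eps k i
  hQ_diff : ∀ k, Differentiable ℝ (Q k)
  hQ_grad : ∀ k, gradient (Q k) (x k) = gradient f (x k)
  hQ_sconv : ∀ k, ConvexOn ℝ Set.univ (fun z => Q k z - M / 2 * ‖z‖ ^ 2)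
  hQ_lip : ∀ k a b, ‖gradient (Q k) a - gradient (Q k) b‖ ≤ L * ‖a - b‖
  hmin : ∀ k, ∀ z : EuclideanSpace ℝ (Fin n),
    Q k (x (k + 1)) + lam * ∑ i, wfun p (x k i) (eps k i) * |x (k + 1) i|
      ≤ Q k z + lam * ∑ i, wfun p (x k i) (eps k i) * |z i|

/-- The smoothed objective `F(x, ε) = f(x) + λ Σᵢ (|xᵢ| + εᵢ)^p`. -/
noncomputable def IRL1.Feps {n : ℕ} (S : IRL1 n)
    (z : EuclideanSpace ℝ (Fin n)) (e : Fin n → ℝ) : ℝ :=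
  S.f z + S.lam * ∑ i, (|z i| + e i) ^ S.p

/-- The objective `F(x) = f(x) + λ Σᵢ |xᵢ|^p`. -/
noncomputable def IRL1.Fobj {n : ℕ} (S : IRL1 n) (z : EuclideanSpace ℝ (Fin n)) : ℝ :=
  S.f z + S.lam * ∑ i, |z i| ^ S.p

/-- The subproblem objective `G(z; x^k, ε^k)`. -/
noncomputable def IRL1.G {n : ℕ} (S : IRL1 n) (k : ℕ)
    (z : EuclideanSpace ℝ (Fin n)) : ℝ :=
  S.Q k z + S.lam * ∑ i, wfun S.p (S.x k i) (S.eps k i) * |z i|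

/-- The level set `{x : F(x) ≤ F(x⁰, ε⁰)}` is bounded. -/
def IRL1.LevelBounded {n : ℕ} (S : IRL1 n) : Prop :=
  Bornology.IsBounded {z : EuclideanSpace ℝ (Fin n) | S.Fobj z ≤ S.Feps (S.x 0) (S.eps 0)}

open Set
open scoped RealInnerProductSpace

theorem Real.rpow_le_rpow_add_mul_sub {p a b : ℝ} (hp0 : 0 ≤ p) (hp1 : p ≤ 1) (ha : 0 < a)
    (hb : 0 ≤ b) : b ^ p ≤ a ^ p + p * a ^ (p - 1) * (b - a) := by
  have hba : 0 ≤ b / a := div_nonneg hb ha.le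
  have bernoulli : (b / a) ^ p ≤ 1 + p * (b / a - 1) := by
    simpa using rpow_one_add_le_one_add_mul_self (by linarith : -1 ≤ b / a - 1) hp0 hp1
  calc b ^ p = a ^ p * (b / a) ^ p := by
        rw [← Real.mul_rpow ha.le hba, mul_div_cancel₀ _ ha.ne']
    _ ≤ a ^ p * (1 + p * (b / a - 1)) := by gcongr
    _ = a ^ p + p * a ^ (p - 1) * (b - a) := by
        rw [Real.rpow_sub ha, Real.rpow_one]; field_simp

theorem Real.sign_eq_coe_sign (x : ℝ) : Real.sign x = (SignType.sign x : ℝ) := by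
  rcases lt_trichotomy x 0 with h | rfl | h
  · simp [Real.sign_of_neg h, h]
  · simp
  · simp [Real.sign_of_pos h, h]

theorem Real.continuousAt_sign_of_ne_zero {x : ℝ} (hx : x ≠ 0) : ContinuousAt Real.sign x := by
  rw [show Real.sign = fun y : ℝ => (SignType.sign y : ℝ) from funext Real.sign_eq_coe_sign]
  exact (continuous_of_discreteTopology (f := fun s : SignType => (s : ℝ))).continuousAt.comp
    (_root_.continuousAt_sign_of_ne_zero hx)

theorem tendsto_sub_succ_of_antitone_of_bddBelow {s : ℕ → ℝ} (hs : Antitone s)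
    (hbdd : BddBelow (range s)) : Tendsto (fun k => s k - s (k + 1)) atTop (𝓝 0) := by
  have hlim := tendsto_atTop_ciInf hs hbdd
  simpa using hlim.sub (hlim.comp (tendsto_add_atTop_nat 1))

theorem tendsto_zero_of_succ_le_mul {e : ℕ → ℝ} {μ : ℝ} (he : ∀ k, 0 ≤ e k) (hμ0 : 0 ≤ μ)
    (hμ1 : μ < 1) (hdec : ∀ k, e (k + 1) ≤ μ * e k) : Tendsto e atTop (𝓝 0) := by
  have hgeom : ∀ k, e k ≤ μ ^ k * e 0 := by
    intro k
    induction k with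
    | zero => simp
    | succ k ih => calc e (k + 1) ≤ μ * e k := hdec k
        _ ≤ μ * (μ ^ k * e 0) := by gcongr
        _ = μ ^ (k + 1) * e 0 := by ring
  refine squeeze_zero he hgeom ?_
  simpa using (tendsto_pow_atTop_nhds_zero_of_lt_one hμ0 hμ1).mul_const (e 0)

section StrongConvexity

variable {E : Type*} [NormedAddCommGroup E] [NormedSpace ℝ E] {s : Set E} {m : ℝ} {f : E → ℝ}
  {x y : E}

theorem StrongConvexOn.sub_le_mul (hf : StrongConvexOn s m f) (hx : x ∈ s) (hy : y ∈ s)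
    {t : ℝ} (ht0 : 0 ≤ t) (ht1 : t ≤ 1) :
    f (x + t • (y - x)) - f x ≤ t * (f y - f x - (1 - t) * (m / 2 * ‖y - x‖ ^ 2)) := by
  have h := hf.2 hx hy (sub_nonneg.2 ht1) ht0 (sub_add_cancel 1 t)
  rw [show (1 - t) • x + t • y = x + t • (y - x) by module, norm_sub_rev] at h
  simp only [smul_eq_mul] at h
  linarith

theorem StrongConvexOn.add_sq_le_of_isMinOn (hf : StrongConvexOn s m f) (hx : x ∈ s)
    (hmin : IsMinOn f s x) (hy : y ∈ s) : f x + m / 2 * ‖y - x‖ ^ 2 ≤ f y := by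
  have hlim : Tendsto (fun t : ℝ => f y - f x - (1 - t) * (m / 2 * ‖y - x‖ ^ 2)) (𝓝[>] 0)
      (𝓝 (f y - f x - m / 2 * ‖y - x‖ ^ 2)) := by
    refine tendsto_nhdsWithin_of_tendsto_nhds (Continuous.tendsto' (by fun_prop) _ _ ?_)
    simp
  have hpos : ∀ᶠ t in 𝓝[>] (0 : ℝ), 0 ≤ f y - f x - (1 - t) * (m / 2 * ‖y - x‖ ^ 2) := by
    filter_upwards [Ioc_mem_nhdsGT one_pos] with t ht
    have hmem := hf.1.add_smul_sub_mem hx hy ⟨ht.1.le, ht.2⟩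
    have := (sub_nonneg.2 (hmin hmem)).trans (hf.sub_le_mul hx hy ht.1.le ht.2)
    exact nonneg_of_mul_nonneg_right (by linarith) ht.1
  linarith [ge_of_tendsto hlim hpos]

theorem StrongConvexOn.add_fderiv_add_sq_le {f' : E →L[ℝ] ℝ} (hf : StrongConvexOn s m f)
    (hx : x ∈ s) (hy : y ∈ s) (hf' : HasFDerivAt f f' x) :
    f x + f' (y - x) + m / 2 * ‖y - x‖ ^ 2 ≤ f y := by
  have hlim : Tendsto (fun t : ℝ => f y - f x - (1 - t) * (m / 2 * ‖y - x‖ ^ 2)) (𝓝[>] 0)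
      (𝓝 (f y - f x - m / 2 * ‖y - x‖ ^ 2)) := by
    refine tendsto_nhdsWithin_of_tendsto_nhds (Continuous.tendsto' (by fun_prop) _ _ ?_)
    simp
  have hslope : ∀ᶠ t in 𝓝[>] (0 : ℝ),
      t⁻¹ • (f (x + t • (y - x)) - f x) ≤ f y - f x - (1 - t) * (m / 2 * ‖y - x‖ ^ 2) := by
    filter_upwards [Ioc_mem_nhdsGT one_pos] with t ht
    rw [smul_eq_mul, inv_mul_le_iff₀ ht.1]
    exact hf.sub_le_mul hx hy ht.1.le ht.2
  linarith [le_of_tendsto_of_tendsto (hf'.hasLineDerivAt (y - x)).tendsto_slope_zero_right hlim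
    hslope]

end StrongConvexity

section Gradient
variable {E : Type*} [NormedAddCommGroup E] [InnerProductSpace ℝ E] [CompleteSpace E]
  {f : E → ℝ} {L : ℝ}

theorem le_add_inner_gradient_add_sq_of_lipschitz (hf : Differentiable ℝ f)
    (hlip : ∀ a b, ‖gradient f a - gradient f b‖ ≤ L * ‖a - b‖) (x y : E) :
    f y ≤ f x + ⟪gradient f x, y - x⟫ + L / 2 * ‖y - x‖ ^ 2 := by
  set v := y - x
  let g : ℝ → ℝ := fun t => f (x + t • v) - t * ⟪gradient f x, v⟫ - L / 2 * t ^ 2 * ‖v‖ ^ 2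
  have hg : ∀ t, HasDerivAt g
      (⟪gradient f (x + t • v) - gradient f x, v⟫ - L * t * ‖v‖ ^ 2) t := by
    intro t
    have hline : HasDerivAt (fun s : ℝ => x + s • v) v t := by
      simpa using ((hasDerivAt_id t).smul_const v).const_add x
    have h1 : HasDerivAt (fun s : ℝ => f (x + s • v)) ⟪gradient f (x + t • v), v⟫ t := by
      simpa [Function.comp_def] using
        (hf _).hasGradientAt.hasFDerivAt.comp_hasDerivAt t hline
    have h2 : HasDerivAt (fun s : ℝ => s * ⟪gradient f x, v⟫) ⟪gradient f x, v⟫ t := by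
      simpa using (hasDerivAt_id t).mul_const ⟪gradient f x, v⟫
    have h3 : HasDerivAt (fun s : ℝ => L / 2 * s ^ 2 * ‖v‖ ^ 2) (L * t * ‖v‖ ^ 2) t :=
      (((hasDerivAt_pow 2 t).const_mul (L / 2)).mul_const (‖v‖ ^ 2)).congr_deriv
        (by push_cast; ring)
    exact ((h1.sub h2).sub h3).congr_deriv (by rw [inner_sub_left])
  have hanti : AntitoneOn g (Icc 0 1) := by
    refine antitoneOn_of_hasDerivWithinAt_nonpos (convex_Icc 0 1)
      (HasDerivAt.continuousOn fun t _ => hg t) (fun t _ => (hg t).hasDerivWithinAt) ?_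
    intro t ht
    rw [interior_Icc] at ht
    calc _ ≤ ‖gradient f (x + t • v) - gradient f x‖ * ‖v‖ - L * t * ‖v‖ ^ 2 := by
          gcongr; exact real_inner_le_norm _ _
      _ ≤ L * ‖t • v‖ * ‖v‖ - L * t * ‖v‖ ^ 2 := by
          gcongr; simpa using hlip (x + t • v) x
      _ = 0 := by rw [norm_smul, Real.norm_of_nonneg ht.1.le]; ring
  have h0 : g 0 = f x := by simp [g]
  have h1 : g 1 = f y - ⟪gradient f x, v⟫ - L / 2 * ‖v‖ ^ 2 := by simp [g, v]
  linarith [hanti (left_mem_Icc.2 zero_le_one) (right_mem_Icc.2 zero_le_one) zero_le_one]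

end Gradient

theorem wfun_pos {p t s : ℝ} (hp : 0 < p) (hs : 0 < s) : 0 < wfun p t s :=
  mul_pos hp (Real.rpow_pos_of_pos (by positivity) _)

theorem rpow_abs_add_le_add_wfun_mul {p x y e e' : ℝ} (hp0 : 0 ≤ p) (hp1 : p ≤ 1) (he : 0 < e)
    (he' : 0 ≤ e') (hee' : e' ≤ e) :
    (|y| + e') ^ p ≤ (|x| + e) ^ p + wfun p x e * (|y| - |x|) := by
  have hw : 0 ≤ wfun p x e := mul_nonneg hp0 (Real.rpow_nonneg (by positivity) _)
  calc (|y| + e') ^ p ≤ (|x| + e) ^ p + wfun p x e * ((|y| + e') - (|x| + e)) :=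
        Real.rpow_le_rpow_add_mul_sub hp0 hp1 (by positivity) (by positivity)
    _ ≤ (|x| + e) ^ p + wfun p x e * (|y| - |x|) := by
        have : |y| + e' - (|x| + e) ≤ |y| - |x| := by linarith
        gcongr

theorem convexOn_univ_sum_mul_abs {ι : Type*} [Fintype ι] {w : ι → ℝ} (hw : ∀ j, 0 ≤ w j) :
    ConvexOn ℝ univ (fun z : EuclideanSpace ℝ ι => ∑ j, w j * |z j|) := by
  refine ⟨convex_univ, fun x _ y _ a b ha hb _ => ?_⟩
  simp only [smul_eq_mul, Finset.mul_sum, ← Finset.sum_add_distrib]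
  refine Finset.sum_le_sum fun j _ => ?_
  calc w j * |(a • x + b • y) j| = w j * |a * x j + b * y j| := by simp
    _ ≤ w j * (a * |x j| + b * |y j|) := by
        refine mul_le_mul_of_nonneg_left ?_ (hw j)
        exact (abs_add_le (a * x j) (b * y j)).trans_eq
          (by rw [abs_mul, abs_mul, abs_of_nonneg ha, abs_of_nonneg hb])
    _ = a * (w j * |x j|) + b * (w j * |y j|) := by ring

theorem gradient_apply_add_mul_sign_eq_zero_of_isLocalMin {ι : Type*} [Fintype ι] [DecidableEq ι]
    {Q : EuclideanSpace ℝ ι → ℝ} {w : ι → ℝ} {x : EuclideanSpace ℝ ι}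
    (hQ : DifferentiableAt ℝ Q x) (hmin : IsLocalMin (fun z => Q z + ∑ j, w j * |z j|) x)
    {i : ι} (hi : x i ≠ 0) :
    gradient Q x i + w i * Real.sign (x i) = 0 := by
  set v : EuclideanSpace ℝ ι := EuclideanSpace.single i 1
  have hsum : ∀ t : ℝ, ∑ j, w j * |(x + t • v) j|
      = ∑ j, w j * |x j| + w i * (|x i + t| - |x i|) := by
    intro t
    have hrest : ∑ j ∈ Finset.univ.erase i, w j * |(x + t • v) j|
        = ∑ j ∈ Finset.univ.erase i, w j * |x j| :=
      Finset.sum_congr rfl fun j hj => by simp [v, Finset.ne_of_mem_erase hj]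
    rw [← Finset.add_sum_erase _ _ (Finset.mem_univ i), hrest,
      ← Finset.add_sum_erase _ _ (Finset.mem_univ i)]
    simp only [PiLp.add_apply, PiLp.smul_apply, PiLp.single_eq_same, smul_eq_mul, mul_one,
      Finset.mem_univ, Finset.sum_erase_eq_sub, add_sub_cancel, v]
    ring
  have hloc : IsLocalMin
      (fun t : ℝ => Q (x + t • v) + (∑ j, w j * |x j| + w i * (|x i + t| - |x i|))) 0 := by
    simp_rw [← hsum]
    exact IsLocalMin.comp_continuous (g := fun t : ℝ => x + t • v) (b := 0) (by simpa using hmin)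
      (by fun_prop)
  have hQline : HasDerivAt (fun t : ℝ => Q (x + t • v)) (gradient Q x i) 0 :=
    (hQ.hasFDerivAt.hasLineDerivAt v).congr_deriv
      (by rw [← inner_gradient_left, EuclideanSpace.inner_single_right]; simp)
  have habs : HasDerivAt (fun t : ℝ => |x i + t|) (Real.sign (x i)) 0 := by
    rw [Real.sign_eq_coe_sign]
    simpa using HasDerivAt.comp_const_add (x i) 0 (f := fun y : ℝ => |y|)
      (by simpa using hasDerivAt_abs hi)
  exact hloc.hasDerivAt_eq_zero (hQline.add (((habs.sub_const |x i|).const_mul (w i)).const_add _))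

namespace IRL1

variable {n : ℕ} (S : IRL1 n)

theorem eps_succ_le (k : ℕ) (i : Fin n) : S.eps (k + 1) i ≤ S.eps k i :=
  (S.heps_dec k i).trans (mul_le_of_le_one_left (S.heps_pos k i).le S.hmu1.le)

theorem strongConvexOn_Q (k : ℕ) : StrongConvexOn univ S.M (S.Q k) :=
  strongConvexOn_iff_convex.2 (S.hQ_sconv k)

theorem strongConvexOn_G (k : ℕ) : StrongConvexOn univ S.M (S.G k) := by
  have hl1 : ConvexOn ℝ univ fun z : EuclideanSpace ℝ (Fin n) =>
      S.lam * ∑ i, wfun S.p (S.x k i) (S.eps k i) * |z i| :=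
    (convexOn_univ_sum_mul_abs fun i => (wfun_pos S.hp0 (S.heps_pos k i)).le).smul S.hlam.le
  have h := (S.strongConvexOn_Q k).add (uniformConvexOn_zero.2 hl1)
  rw [add_zero] at h
  exact h

theorem isMinOn_G (k : ℕ) : IsMinOn (S.G k) univ (S.x (k + 1)) :=
  fun z _ => S.hmin k z

theorem Feps_succ_add_le (k : ℕ) :
    S.Feps (S.x (k + 1)) (S.eps (k + 1)) + (S.M - S.Lf / 2) * ‖S.x (k + 1) - S.x k‖ ^ 2
      ≤ S.Feps (S.x k) (S.eps k) := by
  set x := S.x k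
  set y := S.x (k + 1)
  set w := fun j => wfun S.p (x j) (S.eps k j)
  have hf := le_add_inner_gradient_add_sq_of_lipschitz S.hf_diff S.hf_lip x y
  have hQ := (S.strongConvexOn_Q k).add_fderiv_add_sq_le (mem_univ x) (mem_univ y)
    (S.hQ_diff k x).hasFDerivAt
  rw [← inner_gradient_left, S.hQ_grad k] at hQ
  have hG := (S.strongConvexOn_G k).add_sq_le_of_isMinOn (mem_univ y) (S.isMinOn_G k)
    (mem_univ x)
  have hpow : ∑ j, (|y j| + S.eps (k + 1) j) ^ S.p
      ≤ ∑ j, (|x j| + S.eps k j) ^ S.p + (∑ j, w j * |y j| - ∑ j, w j * |x j|) := by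
    calc _ ≤ ∑ j, ((|x j| + S.eps k j) ^ S.p + w j * (|y j| - |x j|)) :=
          Finset.sum_le_sum fun j _ => rpow_abs_add_le_add_wfun_mul S.hp0.le S.hp1.le
            (S.heps_pos k j) (S.heps_pos (k + 1) j).le (S.eps_succ_le k j)
      _ = _ := by simp only [Finset.sum_add_distrib, ← Finset.sum_sub_distrib, mul_sub]
  have hlam := mul_le_mul_of_nonneg_left hpow S.hlam.le
  rw [norm_sub_rev] at hG
  simp only [Feps, G] at hG ⊢
  linarith

theorem Feps_antitone : Antitone fun k => S.Feps (S.x k) (S.eps k) :=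
  antitone_nat_of_succ_le fun k => by
    have := mul_nonneg (by linarith [S.hM] : 0 ≤ S.M - S.Lf / 2) (sq_nonneg ‖S.x (k + 1) - S.x k‖)
    linarith [S.Feps_succ_add_le k]

theorem Fobj_le_Feps (z : EuclideanSpace ℝ (Fin n)) {e : Fin n → ℝ} (he : ∀ i, 0 ≤ e i) :
    S.Fobj z ≤ S.Feps z e := by
  refine add_le_add le_rfl (mul_le_mul_of_nonneg_left (Finset.sum_le_sum fun i _ => ?_) S.hlam.le)
  exact Real.rpow_le_rpow (abs_nonneg _) (le_add_of_nonneg_right (he i)) S.hp0.le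

theorem Fobj_x_le_Feps_zero (k : ℕ) : S.Fobj (S.x k) ≤ S.Feps (S.x 0) (S.eps 0) :=
  (S.Fobj_le_Feps _ fun i => (S.heps_pos k i).le).trans (S.Feps_antitone (Nat.zero_le k))

theorem exists_tendsto_subseq (hbdd : S.LevelBounded) :
    ∃ (xstar : EuclideanSpace ℝ (Fin n)) (φ : ℕ → ℕ), StrictMono φ ∧
      Tendsto (fun k => S.x (φ k)) atTop (𝓝 xstar) := by
  obtain ⟨xstar, -, φ, hφ, hlim⟩ :=
    hbdd.isCompact_closure.tendsto_subseq fun k => subset_closure (S.Fobj_x_le_Feps_zero k)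
  exact ⟨xstar, φ, hφ, hlim⟩

theorem bddBelow_Feps (hbdd : S.LevelBounded) :
    BddBelow (range fun k => S.Feps (S.x k) (S.eps k)) := by
  obtain ⟨c, hc⟩ := hbdd.isCompact_closure.bddBelow_image S.hf_diff.continuous.continuousOn
  refine ⟨c, forall_mem_range.2 fun k => ?_⟩
  calc c ≤ S.f (S.x k) := hc ⟨S.x k, subset_closure (S.Fobj_x_le_Feps_zero k), rfl⟩
    _ ≤ S.Feps (S.x k) (S.eps k) := le_add_of_nonneg_right <| mul_nonneg S.hlam.le <|
        Finset.sum_nonneg fun i _ =>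
          Real.rpow_nonneg (add_nonneg (abs_nonneg _) (S.heps_pos k i).le) _

theorem tendsto_x_succ_sub (hbdd : S.LevelBounded) :
    Tendsto (fun k => S.x (k + 1) - S.x k) atTop (𝓝 0) := by
  have hc : 0 < S.M - S.Lf / 2 := by linarith [S.hM]
  have hsq : Tendsto (fun k => ‖S.x (k + 1) - S.x k‖ ^ 2) atTop (𝓝 0) := by
    refine squeeze_zero (fun k => sq_nonneg _) (fun k => ?_) (by
      simpa using (tendsto_sub_succ_of_antitone_of_bddBelow S.Feps_antitone
        (S.bddBelow_Feps hbdd)).div_const (S.M - S.Lf / 2))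
    rw [le_div_iff₀ hc]
    linarith [S.Feps_succ_add_le k]
  rw [tendsto_zero_iff_norm_tendsto_zero]
  simpa using hsq.sqrt

theorem gradient_Q_apply_add_eq_zero (k : ℕ) {i : Fin n} (hi : S.x (k + 1) i ≠ 0) :
    gradient (S.Q k) (S.x (k + 1)) i
      + S.lam * wfun S.p (S.x k i) (S.eps k i) * Real.sign (S.x (k + 1) i) = 0 := by
  have hG : (fun z => S.Q k z + ∑ j, S.lam * wfun S.p (S.x k j) (S.eps k j) * |z j|) = S.G k := by
    funext z
    simp only [G, Finset.mul_sum, mul_assoc]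
  refine gradient_apply_add_mul_sign_eq_zero_of_isLocalMin (S.hQ_diff k _)
    (w := fun j => S.lam * wfun S.p (S.x k j) (S.eps k j)) ?_ hi
  rw [hG]
  exact (S.isMinOn_G k).isLocalMin univ_mem

theorem norm_gradient_Q_sub_le (k : ℕ) (z : EuclideanSpace ℝ (Fin n)) :
    ‖gradient (S.Q k) (S.x (k + 1)) - gradient S.f z‖
      ≤ S.L * ‖S.x (k + 1) - S.x k‖ + S.Lf * ‖S.x k - z‖ :=
  calc _ = ‖(gradient (S.Q k) (S.x (k + 1)) - gradient (S.Q k) (S.x k))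
        + (gradient S.f (S.x k) - gradient S.f z)‖ := by rw [S.hQ_grad k]; abel_nf
    _ ≤ _ := (norm_add_le _ _).trans (add_le_add (S.hQ_lip k _ _) (S.hf_lip _ _))

theorem gradient_apply_add_eq_zero_of_tendsto
    (hstep : Tendsto (fun k => S.x (k + 1) - S.x k) atTop (𝓝 0)) {φ : ℕ → ℕ}
    (hφ : Tendsto φ atTop atTop) {xstar : EuclideanSpace ℝ (Fin n)}
    (hx : Tendsto (fun k => S.x (φ k)) atTop (𝓝 xstar)) {i : Fin n} (hi : xstar i ≠ 0) :
    gradient S.f xstar i + S.lam * S.p * |xstar i| ^ (S.p - 1) * Real.sign (xstar i) = 0 := by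
  have hcoord : ∀ {u : ℕ → EuclideanSpace ℝ (Fin n)} {z}, Tendsto u atTop (𝓝 z) →
      Tendsto (fun k => u k i) atTop (𝓝 (z i)) :=
    fun h => ((EuclideanSpace.proj i).continuous.tendsto _).comp h
  have hstepφ := hstep.comp hφ
  have hx1 : Tendsto (fun k => S.x (φ k + 1)) atTop (𝓝 xstar) := by
    simpa using hx.add hstepφ
  have hgrad : Tendsto (fun k => gradient (S.Q (φ k)) (S.x (φ k + 1))) atTop
      (𝓝 (gradient S.f xstar)) := by
    rw [tendsto_iff_norm_sub_tendsto_zero]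
    refine squeeze_zero (fun _ => norm_nonneg _) (fun k => S.norm_gradient_Q_sub_le (φ k) xstar) ?_
    simpa using ((tendsto_zero_iff_norm_tendsto_zero.1 hstepφ).const_mul S.L).add
      ((tendsto_iff_norm_sub_tendsto_zero.1 hx).const_mul S.Lf)
  have hw : Tendsto (fun k => wfun S.p (S.x (φ k) i) (S.eps (φ k) i)) atTop
      (𝓝 (S.p * |xstar i| ^ (S.p - 1))) := by
    have hbase : Tendsto (fun k => |S.x (φ k) i| + S.eps (φ k) i) atTop (𝓝 |xstar i|) := by
      simpa using (hcoord hx).abs.add ((tendsto_zero_of_succ_le_mul (fun k => (S.heps_pos k i).le)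
        S.hmu0.le S.hmu1 fun k => S.heps_dec k i).comp hφ)
    exact (hbase.rpow_const (Or.inl (abs_ne_zero.2 hi))).const_mul S.p
  have hsign : Tendsto (fun k => Real.sign (S.x (φ k + 1) i)) atTop (𝓝 (Real.sign (xstar i))) :=
    (Real.continuousAt_sign_of_ne_zero hi).tendsto.comp (hcoord hx1)
  have hopt : ∀ᶠ k in atTop, gradient (S.Q (φ k)) (S.x (φ k + 1)) i
      + S.lam * wfun S.p (S.x (φ k) i) (S.eps (φ k) i) * Real.sign (S.x (φ k + 1) i) = 0 :=
    ((hcoord hx1).eventually_ne hi).mono fun k hk => S.gradient_Q_apply_add_eq_zero (φ k) hk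
  have hlim := tendsto_nhds_unique ((hcoord hgrad).add ((hw.const_mul S.lam).mul hsign))
    (tendsto_const_nhds.congr' (hopt.mono fun k hk => hk.symm))
  linear_combination hlim

end IRL1

/-- In the IRL1 setting with bounded level set, the set of cluster
points of `{x^k}` is nonempty, and every cluster point `x*` is first-order
stationary for `min f(x) + λ Σᵢ |xᵢ|^p`, i.e.
`∇ᵢf(x*) + λ p |x*_i|^(p-1) sign(x*_i) = 0` whenever `x*_i ≠ 0`. -/
theorem stmt12 {n : ℕ} (S : IRL1 n) (hbdd : S.LevelBounded) :
    (∃ (xstar : EuclideanSpace ℝ (Fin n)) (φ : ℕ → ℕ), StrictMono φ ∧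
      Tendsto (fun k => S.x (φ k)) atTop (nhds xstar)) ∧
    ∀ xstar : EuclideanSpace ℝ (Fin n),
      (∃ φ : ℕ → ℕ, StrictMono φ ∧ Tendsto (fun k => S.x (φ k)) atTop (nhds xstar)) →
      ∀ i : Fin n, xstar i ≠ 0 →
        gradient S.f xstar i +
          S.lam * S.p * |xstar i| ^ (S.p - 1) * Real.sign (xstar i) = 0 := by
  refine ⟨S.exists_tendsto_subseq hbdd, ?_⟩
  rintro xstar ⟨φ, hφ, hx⟩ i hi
  exact S.gradient_apply_add_eq_zero_of_tendsto (S.tendsto_x_succ_sub hbdd) hφ.tendsto_atTop hx hi
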